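/- Let J satisfy (J), let a : ℝ → ℝ be bounded and continuous, and let λ > sup a. Suppose η : ℝ → ℝ is continuous, compactly supported, η ≤ 0 and η ≢ 0, and suppose φ : ℝ → ℝ is continuous with lim_{|x|→∞} φ(x) = 0 and satisfies (J*φ)(x) − φ(x) + (a(x) − λ)φ(x) = η(x) for all x ∈ ℝ. Then φ(x) > 0 for every x ∈ ℝ. -/

import Mathlib

/-!
A minimum principle. If `φ` were negative somewhere, it would attain a negative global minimum
at some `x₁` (it vanishes at `±∞`); there `J * φ ≥ φ`, so the equation gives
`η x₁ ≥ (a x₁ - λ) φ x₁ > 0`, which is impossible. Hence `φ ≥ 0`. At a zero `x` of `φ` the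
equation gives `J * φ (x) = η x ≤ 0`, so `φ` vanishes on `(x - δ, x + δ)`, where `J (x - ·) > 0`
because `J` is even, non-increasing on `[0, ∞)` and its support reaches `δ`: the zero set of `φ`
is clopen. It cannot be all of `ℝ` since `η ≢ 0`, so it is empty.
-/

open MeasureTheory Filter Real Set

/-- Convolution `(J*φ)(x) = ∫ J(y) φ(x−y) dy`. -/
noncomputable def convol (J φ : ℝ → ℝ) : ℝ → ℝ := fun x => ∫ y, J y * φ (x - y)

lemma pos_of_abs_lt_of_tsupport_eq_Icc {J : ℝ → ℝ} {δ : ℝ} (hJnonneg : ∀ x, 0 ≤ J x)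
    (hJeven : ∀ x, J (-x) = J x) (hJanti : AntitoneOn J (Ici 0))
    (hJsupp : tsupport J = Icc (-δ) δ) {y : ℝ} (hy : |y| < δ) : 0 < J y := by
  have hJabs : ∀ w, J |w| = J w := fun w => by
    rcases abs_cases w with ⟨h, -⟩ | ⟨h, -⟩ <;> simp [h, hJeven]
  rw [← hJabs]
  refine (hJnonneg _).lt_of_ne' fun hzero => ?_
  have hsupp : Function.support J ⊆ Icc (-|y|) |y| := by
    intro w hw
    rw [mem_Icc, ← abs_le]
    by_contra! hlt
    apply hw
    rw [← hJabs]
    exact le_antisymm (hzero ▸ hJanti (abs_nonneg y) (abs_nonneg w) hlt.le) (hJnonneg _)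
  have hδ : δ ∈ Icc (-|y|) |y| :=
    closure_minimal hsupp isClosed_Icc
      (by rw [← tsupport, hJsupp]; exact right_mem_Icc.2 (by linarith [abs_nonneg y]))
  linarith [hδ.2]

lemma exists_neg_forall_le_of_tendsto {φ : ℝ → ℝ} (hφ : Continuous φ)
    (htop : Tendsto φ atTop (nhds 0)) (hbot : Tendsto φ atBot (nhds 0)) {x₀ : ℝ}
    (hx₀ : φ x₀ < 0) : ∃ x₁, φ x₁ < 0 ∧ ∀ y, φ x₁ ≤ φ y := by
  have hco : Tendsto φ (cocompact ℝ) (nhds 0) := by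
    rw [cocompact_eq_atBot_atTop]
    exact tendsto_sup.2 ⟨hbot, htop⟩
  obtain ⟨x₁, hx₁⟩ :=
    hφ.exists_forall_le' x₀ ((hco.eventually (eventually_gt_nhds hx₀)).mono fun _ h => h.le)
  exact ⟨x₁, (hx₁ x₀).trans_lt hx₀, hx₁⟩

section Convolution

variable {J φ : ℝ → ℝ}

lemma convol_nonneg (hJnonneg : ∀ y, 0 ≤ J y) (hφ0 : ∀ y, 0 ≤ φ y) (x : ℝ) :
    0 ≤ convol J φ x :=
  integral_nonneg fun y => mul_nonneg (hJnonneg y) (hφ0 _)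

variable (hJ : Continuous J) (hJcs : HasCompactSupport J) (hφ : Continuous φ)
include hJ hJcs hφ

lemma integrable_mul_comp_sub (x : ℝ) : Integrable fun y => J y * φ (x - y) :=
  (hJ.mul (hφ.comp (continuous_const.sub continuous_id))).integrable_of_hasCompactSupport
    hJcs.mul_right

lemma le_convol_of_forall_le (hJnonneg : ∀ y, 0 ≤ J y) (hJint : ∫ y, J y = 1) {m : ℝ}
    (hm : ∀ y, m ≤ φ y) (x : ℝ) : m ≤ convol J φ x :=
  calc m = ∫ y, J y * m := by rw [integral_mul_const, hJint, one_mul]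
    _ ≤ convol J φ x :=
      integral_mono ((hJ.integrable_of_hasCompactSupport hJcs).mul_const _)
        (integrable_mul_comp_sub hJ hJcs hφ x) fun y => mul_le_mul_of_nonneg_left (hm _) (hJnonneg y)

lemma eq_zero_of_convol_eq_zero (hJnonneg : ∀ y, 0 ≤ J y) (hφ0 : ∀ y, 0 ≤ φ y) {x : ℝ}
    (hx : convol J φ x = 0) {y : ℝ} (hy : 0 < J y) : φ (x - y) = 0 := by
  have hae := (integral_eq_zero_iff_of_nonneg (fun y => mul_nonneg (hJnonneg y) (hφ0 _))
    (integrable_mul_comp_sub hJ hJcs hφ x)).1 hx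
  have hzero := congrFun (((hJ.mul (hφ.comp (continuous_const.sub continuous_id))).ae_eq_iff_eq
    volume continuous_zero).1 hae) y
  exact (mul_eq_zero.1 hzero).resolve_left hy.ne'

lemma forall_eq_zero_or_forall_pos_of_convol_nonpos (hJnonneg : ∀ y, 0 ≤ J y) {δ : ℝ}
    (hδ : 0 < δ) (hJpos : ∀ y, |y| < δ → 0 < J y) (hφ0 : ∀ x, 0 ≤ φ x)
    (hconv : ∀ x, φ x = 0 → convol J φ x ≤ 0) : (∀ x, φ x = 0) ∨ ∀ x, 0 < φ x := by
  have hopen : IsOpen {x | φ x = 0} := by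
    refine Metric.isOpen_iff.2 fun x hx => ⟨δ, hδ, fun z hz => ?_⟩
    have hx0 : convol J φ x = 0 := (hconv x hx).antisymm (convol_nonneg hJnonneg hφ0 x)
    have hxz : |x - z| < δ := by rwa [abs_sub_comm, ← Real.dist_eq]
    simpa using eq_zero_of_convol_eq_zero hJ hJcs hφ hJnonneg hφ0 hx0 (hJpos _ hxz)
  rcases isClopen_iff.1 ⟨isClosed_eq hφ continuous_const, hopen⟩ with h | h
  · exact Or.inr fun x => (hφ0 x).lt_of_ne' fun hx => (eq_empty_iff_forall_notMem.1 h) x hx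
  · exact Or.inl fun x => (eq_univ_iff_forall.1 h) x

end Convolution

theorem stmt7_general (J a η φ : ℝ → ℝ) (δ ap lam : ℝ) (hδ : 0 < δ)
    (hJC1 : ContDiff ℝ 1 J) (hJnonneg : ∀ x, 0 ≤ J x)
    (hJeven : ∀ x, J (-x) = J x) (hJanti : AntitoneOn J (Set.Ici 0))
    (hJsupp : tsupport J = Set.Icc (-δ) δ) (hJint : (∫ y, J y) = 1)
    (hap : IsLUB (Set.range a) ap) (hlam : ap < lam)
    (hηnonpos : ∀ x, η x ≤ 0) (hηne : ∃ x, η x ≠ 0)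
    (hφC : Continuous φ)
    (hφtop : Tendsto φ atTop (nhds 0)) (hφbot : Tendsto φ atBot (nhds 0))
    (heq : ∀ x, convol J φ x - φ x + (a x - lam) * φ x = η x) :
    ∀ x, 0 < φ x := by
  have hJC : Continuous J := hJC1.continuous
  have hJcs : HasCompactSupport J := by rw [HasCompactSupport, hJsupp]; exact isCompact_Icc
  have hφ0 : ∀ x, 0 ≤ φ x := by
    intro x₀
    by_contra! hx₀
    obtain ⟨x₁, hx₁, hmin⟩ := exists_neg_forall_le_of_tendsto hφC hφtop hφbot hx₀
    have hconv := le_convol_of_forall_le hJC hJcs hφC hJnonneg hJint hmin x₁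
    have ha : a x₁ < lam := (hap.1 ⟨x₁, rfl⟩).trans_lt hlam
    nlinarith [heq x₁, hηnonpos x₁, mul_pos_of_neg_of_neg hx₁ (sub_neg.2 ha)]
  have hconv : ∀ x, φ x = 0 → convol J φ x ≤ 0 := fun x hx => by
    simpa [hx] using (heq x).trans_le (hηnonpos x)
  rcases forall_eq_zero_or_forall_pos_of_convol_nonpos hJC hJcs hφC hJnonneg hδ
      (fun _ => pos_of_abs_lt_of_tsupport_eq_Icc hJnonneg hJeven hJanti hJsupp) hφ0 hconv with
    hzero | hpos
  · obtain ⟨x, hx⟩ := hηne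
    exact absurd (by simpa [convol, hzero] using (heq x).symm) hx
  · exact hpos

/-- if `(H + a − λ)φ = η` with `η ≤ 0`, `η ≢ 0` continuous and
compactly supported, `λ > sup a`, and `φ` continuous with `φ → 0` at `±∞`,
then `φ > 0` everywhere. -/
theorem stmt7 (J a η φ : ℝ → ℝ) (δ ap lam : ℝ) (hδ : 0 < δ)
    (hJC1 : ContDiff ℝ 1 J) (hJnonneg : ∀ x, 0 ≤ J x)
    (hJeven : ∀ x, J (-x) = J x) (hJanti : AntitoneOn J (Set.Ici 0))
    (hJsupp : tsupport J = Set.Icc (-δ) δ) (hJint : (∫ y, J y) = 1)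
    (haC : Continuous a) (hap : IsLUB (Set.range a) ap) (hlam : ap < lam)
    (hηC : Continuous η) (hηsupp : HasCompactSupport η)
    (hηnonpos : ∀ x, η x ≤ 0) (hηne : ∃ x, η x ≠ 0)
    (hφC : Continuous φ)
    (hφtop : Tendsto φ atTop (nhds 0)) (hφbot : Tendsto φ atBot (nhds 0))
    (heq : ∀ x, convol J φ x - φ x + (a x - lam) * φ x = η x) :
    ∀ x, 0 < φ x :=
  stmt7_general J a η φ δ ap lam hδ hJC1 hJnonneg hJeven hJanti hJsupp hJint hap hlam hηnonpos hηne
    hφC hφtop hφbot heq
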